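/- Monte Carlo representation of a linear recursion (Griffiths–Tavaré): Let S be a countable set with a distinguished root ρ, and suppose p : S → [0,∞) satisfies p(ρ) = 1 and p(x) = Σ_y c(x,y) p(y) for x ≠ ρ, where c(x,y) ≥ 0, each x ≠ ρ has f(x) := Σ_y c(x,y) > 0 and finitely many y with c(x,y) > 0, and every sequence x = x₀, x₁, ... with c(x_i, x_{i+1}) > 0 reaches ρ in at most N(x) steps (strictly decreasing complexity). Define the Markov chain with transitions P(x → y) = c(x,y)/f(x) for x ≠ ρ, absorbed at ρ, set f(ρ) := 1, and let τ be the absorption time. Then p(x) = E_x[Π_{i=0}^{τ-1} f(H_i)]. -/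

import Mathlib

/-!
The path sum `x ↦ Σ_paths Π c(g_i, g_{i+1})` over paths from `x` that first hit `ρ` at their
end satisfies the same linear recursion as `p`, with the same value `1` at `ρ`. Since the
complexity `N` strictly decreases along every transition of positive weight, strong induction
on `N` shows that this recursion has only one solution, so `p` is the path sum. Finally each
path weight `Π c(g_i, g_{i+1})` factors as the Markov path probability `Π c(g_i, g_{i+1}) / f(g_i)`
times `Π f(g_i)`, because every row sum `f(g_i)` with `g_i ≠ ρ` is positive and finite.
-/

open scoped ENNReal

namespace GriffithsTavare

variable {S : Type*}

def IsHittingPath (ρ x : S) {m : ℕ} (g : Fin (m + 1) → S) : Prop :=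
  g 0 = x ∧ g (Fin.last m) = ρ ∧ ∀ i : Fin m, g i.castSucc ≠ ρ

noncomputable def pathWeight (w : S → S → ℝ≥0∞) {m : ℕ} (g : Fin (m + 1) → S) : ℝ≥0∞ :=
  ∏ i : Fin m, w (g i.castSucc) (g i.succ)

open Classical in
noncomputable def hittingSum (ρ : S) (w : S → S → ℝ≥0∞) (m : ℕ) (x : S) : ℝ≥0∞ :=
  ∑' g : Fin (m + 1) → S, if IsHittingPath ρ x g then pathWeight w g else 0

noncomputable def pathSum (ρ : S) (w : S → S → ℝ≥0∞) (x : S) : ℝ≥0∞ :=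
  ∑' m, hittingSum ρ w m x

variable {ρ : S} {w : S → S → ℝ≥0∞}

theorem isHittingPath_cons_iff {x a : S} {m : ℕ} {h : Fin (m + 1) → S} :
    IsHittingPath ρ x (Fin.cons a h : Fin (m + 2) → S) ↔
      a = x ∧ a ≠ ρ ∧ IsHittingPath ρ (h 0) h := by
  simp only [IsHittingPath, Fin.forall_fin_succ, Fin.cons_zero, Fin.castSucc_zero,
    ← Fin.succ_castSucc, Fin.cons_succ, ← Fin.succ_last]
  tauto

theorem pathWeight_cons (a : S) {m : ℕ} (h : Fin (m + 1) → S) :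
    pathWeight w (Fin.cons a h : Fin (m + 2) → S) = w a (h 0) * pathWeight w h := by
  simp only [pathWeight, Fin.prod_univ_succ, Fin.castSucc_zero, Fin.cons_zero, Fin.cons_succ,
    ← Fin.succ_castSucc]

theorem hittingSum_zero_self : hittingSum ρ w 0 ρ = 1 := by
  rw [hittingSum, tsum_eq_single (fun _ => ρ), if_pos ⟨rfl, rfl, finZeroElim⟩]
  · exact Fin.prod_univ_zero _
  · refine fun g hg => if_neg fun hp => hg (funext fun i => ?_)
    rw [Subsingleton.elim (α := Fin 1) i (Fin.last 0)]
    exact hp.2.1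

theorem hittingSum_zero_of_ne {x : S} (hx : x ≠ ρ) : hittingSum ρ w 0 x = 0 :=
  ENNReal.tsum_eq_zero.2 fun _ => if_neg fun hp => hx (hp.1.symm.trans hp.2.1)

theorem hittingSum_succ_self (m : ℕ) : hittingSum ρ w (m + 1) ρ = 0 :=
  ENNReal.tsum_eq_zero.2 fun _ => if_neg fun hp => hp.2.2 0 hp.1

open Classical in
theorem hittingSum_succ_of_ne {x : S} (hx : x ≠ ρ) (m : ℕ) :
    hittingSum ρ w (m + 1) x = ∑' y, w x y * hittingSum ρ w m y := by
  calc hittingSum ρ w (m + 1) x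
      = ∑' (a : S) (h : Fin (m + 1) → S), if IsHittingPath ρ x (Fin.cons a h : Fin (m + 2) → S)
          then pathWeight w (Fin.cons a h : Fin (m + 2) → S) else 0 := by
        rw [hittingSum, ← (Fin.consEquiv _).tsum_eq, ENNReal.tsum_prod']
        rfl
    _ = ∑' h : Fin (m + 1) → S,
          w x (h 0) * if IsHittingPath ρ (h 0) h then pathWeight w h else 0 := by
        rw [tsum_eq_single x fun a ha => ENNReal.tsum_eq_zero.2 fun h =>
          if_neg fun hp => ha (isHittingPath_cons_iff.1 hp).1]
        refine tsum_congr fun h => ?_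
        simp only [isHittingPath_cons_iff, pathWeight_cons, true_and, ne_eq, hx, not_false_eq_true]
        split_ifs <;> simp
    _ = ∑' (h : Fin (m + 1) → S) (y : S),
          w x y * if IsHittingPath ρ y h then pathWeight w h else 0 :=
        tsum_congr fun h => .symm <| tsum_eq_single (h 0) fun y hy => by
          rw [if_neg fun hp => hy hp.1.symm, mul_zero]
    _ = ∑' y, w x y * hittingSum ρ w m y := by
        rw [ENNReal.tsum_comm]
        simp only [hittingSum, ENNReal.tsum_mul_left]

theorem pathSum_self : pathSum ρ w ρ = 1 := by
  rw [pathSum, tsum_eq_zero_add' ENNReal.summable, hittingSum_zero_self]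
  simp only [hittingSum_succ_self, tsum_zero, add_zero]

theorem pathSum_of_ne {x : S} (hx : x ≠ ρ) : pathSum ρ w x = ∑' y, w x y * pathSum ρ w y := by
  rw [pathSum, tsum_eq_zero_add' ENNReal.summable, hittingSum_zero_of_ne hx, zero_add]
  simp only [hittingSum_succ_of_ne hx, pathSum, ← ENNReal.tsum_mul_left]
  exact ENNReal.tsum_comm

theorem eq_pathSum_of_recursion {p : S → ℝ≥0∞} (N : S → ℕ) (hN : ∀ x y, w x y ≠ 0 → N y < N x)
    (hpρ : p ρ = 1) (hrec : ∀ x, x ≠ ρ → p x = ∑' y, w x y * p y) (x : S) :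
    p x = pathSum ρ w x := by
  induction hn : N x using Nat.strong_induction_on generalizing x with
  | _ n ih =>
    by_cases hx : x = ρ
    · rw [hx, hpρ, pathSum_self]
    rw [hrec x hx, pathSum_of_ne hx]
    refine tsum_congr fun y => ?_
    by_cases hxy : w x y = 0
    · simp [hxy]
    · rw [ih (N y) (hn ▸ hN x y hxy) y rfl]

theorem tsum_ne_top_of_support_finite {f : S → ℝ≥0∞} (hfin : (Function.support f).Finite)
    (hf : ∀ y, f y ≠ ⊤) : ∑' y, f y ≠ ⊤ := by
  rw [tsum_eq_sum' (s := hfin.toFinset) (by simp)]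
  exact ENNReal.sum_ne_top.2 fun y _ => hf y

theorem prod_div_mul_prod_cancel {ι : Type*} (s : Finset ι) (a b : ι → ℝ≥0∞)
    (hb₀ : ∀ i ∈ s, b i ≠ 0) (hb : ∀ i ∈ s, b i ≠ ⊤) :
    (∏ i ∈ s, a i / b i) * ∏ i ∈ s, b i = ∏ i ∈ s, a i := by
  rw [← Finset.prod_mul_distrib]
  exact Finset.prod_congr rfl fun i hi => ENNReal.div_mul_cancel (hb₀ i hi) (hb i hi)

end GriffithsTavare

open GriffithsTavare

open Classical in
theorem griffiths_tavare_representation_general {S : Type*}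
    (ρ : S) (c : S → S → ℝ≥0∞) (p : S → ℝ≥0∞)
    (hfin : ∀ x, (Function.support (c x)).Finite)
    (hctop : ∀ x y, c x y ≠ ⊤)
    (N : S → ℕ) (hN : ∀ x y, c x y ≠ 0 → N y < N x)
    (hf : ∀ x, x ≠ ρ → 0 < ∑' y, c x y)
    (hpρ : p ρ = 1)
    (hrec : ∀ x, x ≠ ρ → p x = ∑' y, c x y * p y) :
    ∀ x : S,
      p x = ∑' (m : ℕ), ∑' (g : Fin (m + 1) → S),
        if g 0 = x ∧ g (Fin.last m) = ρ ∧ ∀ i : Fin m, g i.castSucc ≠ ρ then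
          (∏ i : Fin m, c (g i.castSucc) (g i.succ) / ∑' y, c (g i.castSucc) y) *
            ∏ i : Fin m, ∑' y, c (g i.castSucc) y
        else 0 := by
  intro x
  rw [eq_pathSum_of_recursion N hN hpρ hrec x]
  refine tsum_congr fun m => tsum_congr fun g => ?_
  by_cases hg : IsHittingPath ρ x g
  · rw [if_pos hg, if_pos (show g 0 = x ∧ _ from hg), prod_div_mul_prod_cancel _ _ _
      (fun i _ => (hf _ (hg.2.2 i)).ne')
      (fun i _ => tsum_ne_top_of_support_finite (hfin _) (hctop _))]
    rfl
  · rw [if_neg hg, if_neg (show ¬(g 0 = x ∧ _) from hg)]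

open Classical in
/-- Monte Carlo representation of a linear recursion with nonnegative coefficients
(Griffiths–Tavaré): if `p : S → [0,∞]` satisfies `p(ρ) = 1` and
`p(x) = Σ_y c(x,y) p(y)` for `x ≠ ρ`, where each row of `c` has finite support
and finite entries, a complexity `N` strictly decreases along transitions
(`c(x,y) ≠ 0 → N(y) < N(x)`), and `f(x) := Σ_y c(x,y) > 0` for `x ≠ ρ`, then for
the Markov chain `H` with transitions `P(x → y) = c(x,y)/f(x)` absorbed at `ρ`
(absorption time `τ`), one has `p(x) = E_x[Π_{i=0}^{τ-1} f(H_i)]`; the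
expectation is written as the sum over all paths `x = g₀, …, g_m = ρ` (with
`g_i ≠ ρ` for `i < m`) of the path probability times `Π_{i<m} f(g_i)`. -/
theorem griffiths_tavare_representation {S : Type*} [Countable S]
    (ρ : S) (c : S → S → ℝ≥0∞) (p : S → ℝ≥0∞)
    (hfin : ∀ x, (Function.support (c x)).Finite)
    (hctop : ∀ x y, c x y ≠ ⊤)
    (N : S → ℕ) (hN : ∀ x y, c x y ≠ 0 → N y < N x)
    (hf : ∀ x, x ≠ ρ → 0 < ∑' y, c x y)
    (hpρ : p ρ = 1)
    (hrec : ∀ x, x ≠ ρ → p x = ∑' y, c x y * p y) :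
    ∀ x : S,
      p x = ∑' (m : ℕ), ∑' (g : Fin (m + 1) → S),
        if g 0 = x ∧ g (Fin.last m) = ρ ∧ ∀ i : Fin m, g i.castSucc ≠ ρ then
          (∏ i : Fin m, c (g i.castSucc) (g i.succ) / ∑' y, c (g i.castSucc) y) *
            ∏ i : Fin m, ∑' y, c (g i.castSucc) y
        else 0 :=
  griffiths_tavare_representation_general ρ c p hfin hctop N hN hf hpρ hrec
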